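/- arXiv:1104.0076 — 3 statements merged into one kernel-verified Lean document; each statement's English description precedes it below -/
import Mathlib

section
/- Let g : ℝ → ℝ be a continuous L-periodic function with L > 0, and let α > 0. Then for every interval (e,f) ⊆ (0,1), the integral ∫_e^f g(x/ε^α) dx converges to (f - e) · (1/L) ∫_0^L g(s) ds as ε → 0⁺. -/
open Set Filter MeasureTheory intervalIntegral
open scoped Topology

/-!
Write `F(t) = ∫_0^t g` and `I = ∫_0^L g`. Periodicity gives `F(t + L) = F(t) + I`, so
`φ(t) = F(t) - (t/L) I` (`primitiveSubMean g L`) is continuous and `L`-periodic, hence bounded.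
Substituting `y = x/c`,
`∫_e^f g(x/c) dx = c (F(f/c) - F(e/c)) = (f - e) I / L + c (φ(f/c) - φ(e/c))`,
and the last term is `O(c)`; finally `c = ε^α → 0`.
-/

section PrimitiveSubMean

variable {E : Type*} [NormedAddCommGroup E] [NormedSpace ℝ E]

noncomputable def primitiveSubMean (g : ℝ → E) (T t : ℝ) : E :=
  (∫ x in 0..t, g x) - (t / T) • ∫ x in 0..T, g x

variable {g : ℝ → E} {T : ℝ}

theorem integral_comp_div_eq_add_primitiveSubMean (h_int : ∀ a b, IntervalIntegrable g volume a b)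
    {c : ℝ} (hc : c ≠ 0) (a b : ℝ) :
    ∫ x in a..b, g (x / c) = (b - a) • T⁻¹ • (∫ x in 0..T, g x) +
      c • (primitiveSubMean g T (b / c) - primitiveSubMean g T (a / c)) := by
  have h_scale : ∀ y : ℝ, c * (y / c / T) = y * T⁻¹ := fun y => by field_simp
  rw [integral_comp_div _ hc, ← integral_interval_sub_left (h_int 0 (b / c)) (h_int 0 (a / c))]
  simp only [primitiveSubMean, smul_sub, smul_smul, h_scale]
  module

end PrimitiveSubMean

namespace Function.Periodic

variable {E : Type*} [NormedAddCommGroup E] [NormedSpace ℝ E] {g : ℝ → E} {T : ℝ}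

theorem periodic_primitiveSubMean (hg : Periodic g T) (hT : T ≠ 0)
    (h_int : IntervalIntegrable g volume 0 T) : Periodic (primitiveSubMean g T) T := by
  intro t
  have h_int' := hg.intervalIntegrable₀ hT h_int
  have h_period : ∫ x in t..t + T, g x = ∫ x in 0..T, g x := by
    simpa using hg.intervalIntegral_add_eq t 0
  rw [primitiveSubMean, primitiveSubMean, ← integral_add_adjacent_intervals (h_int' 0 t)
    (h_int' t (t + T)), h_period, add_div, div_self hT, add_smul, one_smul]
  abel

theorem isBounded_range_primitiveSubMean (hg : Periodic g T) (hT : T ≠ 0)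
    (h_int : IntervalIntegrable g volume 0 T) :
    Bornology.IsBounded (range (primitiveSubMean g T)) := by
  refine (hg.periodic_primitiveSubMean hT h_int).isBounded_of_continuous hT ?_
  exact (continuous_primitive (hg.intervalIntegrable₀ hT h_int) 0).sub
    ((continuous_id.div_const T).smul continuous_const)

theorem tendsto_intervalIntegral_comp_div (hg : Periodic g T) (hT : T ≠ 0)
    (h_int : IntervalIntegrable g volume 0 T) (a b : ℝ) :
    Tendsto (fun c => ∫ x in a..b, g (x / c)) (𝓝[≠] 0)
      (𝓝 ((b - a) • T⁻¹ • ∫ x in 0..T, g x)) := by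
  obtain ⟨C, hC⟩ := (hg.isBounded_range_primitiveSubMean hT h_int).exists_norm_le
  have h_error : Tendsto (fun c : ℝ => c • (primitiveSubMean g T (b / c) -
      primitiveSubMean g T (a / c))) (𝓝[≠] 0) (𝓝 0) := by
    refine tendsto_nhdsWithin_of_tendsto_nhds tendsto_id |>.zero_smul_isBoundedUnder_le ?_
    refine isBoundedUnder_of ⟨C + C, fun c => (norm_sub_le _ _).trans ?_⟩
    exact add_le_add (hC _ (mem_range_self _)) (hC _ (mem_range_self _))
  rw [← add_zero ((b - a) • _)]
  refine (tendsto_const_nhds.add h_error).congr' ?_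
  filter_upwards [self_mem_nhdsWithin] with c hc
  exact (integral_comp_div_eq_add_primitiveSubMean (hg.intervalIntegrable₀ hT h_int) hc a b).symm

end Function.Periodic

theorem stmt2_general (g : ℝ → ℝ) (L α e f : ℝ)
    (hg : Continuous g) (hL : 0 < L) (hper : ∀ y : ℝ, g (y + L) = g y)
    (hα : 0 < α) :
    Tendsto (fun ε : ℝ => ∫ x in e..f, g (x / ε ^ α))
      (nhdsWithin 0 (Ioi 0))
      (nhds ((f - e) * ((1 / L) * ∫ s in (0:ℝ)..L, g s))) := by
  have h_rpow : Tendsto (fun ε : ℝ => ε ^ α) (𝓝[>] 0) (𝓝[≠] 0) := by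
    refine tendsto_nhdsWithin_of_tendsto_nhds_of_eventually_within _ ?_ ?_
    · simpa [Real.zero_rpow hα.ne'] using
        (Real.continuousAt_rpow_const 0 α (Or.inr hα.le)).tendsto.mono_left nhdsWithin_le_nhds
    · filter_upwards [self_mem_nhdsWithin] with ε hε using (Real.rpow_pos_of_pos hε α).ne'
  rw [one_div, ← smul_eq_mul, ← smul_eq_mul]
  exact ((Function.Periodic.tendsto_intervalIntegral_comp_div hper hL.ne'
    (hg.intervalIntegrable 0 L) e f).comp h_rpow)

/-- averaging of a continuous `L`-periodic function over a subinterval of `(0,1)`: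
`∫_e^f g(x/ε^α) dx → (f-e)·(1/L)∫_0^L g(s) ds` as `ε → 0⁺`. -/
theorem stmt2 (g : ℝ → ℝ) (L α e f : ℝ)
    (hg : Continuous g) (hL : 0 < L) (hper : ∀ y : ℝ, g (y + L) = g y)
    (hα : 0 < α) (he : 0 ≤ e) (hef : e < f) (hf : f ≤ 1) :
    Tendsto (fun ε : ℝ => ∫ x in e..f, g (x / ε ^ α))
      (nhdsWithin 0 (Ioi 0))
      (nhds ((f - e) * ((1 / L) * ∫ s in (0:ℝ)..L, g s))) :=
  stmt2_general g L α e f hg hL hper hα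
end

section
/- Let Q_ε = (-ε^α, ε^α) × (0,1) with α > 1, and let u^ε be the harmonic-type solution given by the explicit Fourier series u^ε(x,y) = ū₀ + Σ_{n≥1} (u₀, φₙ^ε) φₙ^ε(x) cosh(nπ(1-y)/ε^{α-1}) / cosh(nπ/ε^{α-1}), where φₙ^ε(x) = ε^{-α/2} cos(nπx/ε^α) and ū₀ is the average of u₀ over (-ε^α, ε^α). Then there is a constant C independent of ε and u₀ such that ∫_{-ε^α}^{ε^α} |u^ε(x,y) - ū₀|² dx ≤ C exp(-2yπ/ε^{α-1}) ‖u₀‖²_{L²(-ε^α, ε^α)} for all y ∈ [0,1]. -/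
open Real Set MeasureTheory intervalIntegral

/-- The orthonormal cosine basis functions `φₙ^ε(x) = ε^{-α/2} cos(nπx/ε^α)`. -/
noncomputable def cosBasis (ε α : ℝ) (n : ℕ) (x : ℝ) : ℝ :=
  ε ^ (-(α / 2)) * Real.cos ((n : ℝ) * π * x / ε ^ α)

/-- Fourier coefficient `(u₀, φₙ^ε)` in `L²(-ε^α, ε^α)`. -/
noncomputable def cosCoef (ε α : ℝ) (u₀ : ℝ → ℝ) (n : ℕ) : ℝ :=
  ∫ x in (-(ε ^ α))..(ε ^ α), u₀ x * cosBasis ε α n x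

/-- The average `ū₀` of `u₀` over `(-ε^α, ε^α)`. -/
noncomputable def avg (ε α : ℝ) (u₀ : ℝ → ℝ) : ℝ :=
  (1 / (2 * ε ^ α)) * ∫ x in (-(ε ^ α))..(ε ^ α), u₀ x

/-- The explicit Fourier-series solution
`u^ε(x,y) = ū₀ + Σ_{n≥1} (u₀,φₙ^ε) φₙ^ε(x) cosh(nπ(1-y)/ε^{α-1})/cosh(nπ/ε^{α-1})`. -/
noncomputable def fourierSol (ε α : ℝ) (u₀ : ℝ → ℝ) (x y : ℝ) : ℝ :=
  avg ε α u₀ + ∑' n : ℕ,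
    cosCoef ε α u₀ (n + 1) * cosBasis ε α (n + 1) x *
      (Real.cosh (((n : ℝ) + 1) * π * (1 - y) / ε ^ (α - 1)) /
        Real.cosh (((n : ℝ) + 1) * π / ε ^ (α - 1)))

/-
In the cosine basis `φₙ^ε`, the map `u₀ ↦ u^ε(·, y) - ū₀` multiplies the `n`-th coefficient by
`cosh(nπ(1-y)/β) / cosh(nπ/β) ≤ 2 exp(-nπy/β) ≤ 2 exp(-πy/β)`, where `β = ε^(α-1)`. By Bessel's
inequality every partial sum of the series therefore has squared `L²` norm at most
`4 exp(-2πy/β) ‖u₀‖²`, and Fatou's lemma passes the bound to the pointwise sum of the series.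
-/

open Filter Finset

theorem cosh_mul_one_sub_div_cosh_le {A : ℝ} (hA : 0 ≤ A) {y : ℝ} (hy : y ≤ 1) :
    cosh (A * (1 - y)) / cosh A ≤ 2 * exp (-(A * y)) := by
  have hcosh : cosh (A * (1 - y)) ≤ exp (A * (1 - y)) := by
    rw [cosh_eq]
    linarith [exp_le_exp.2 (by nlinarith : -(A * (1 - y)) ≤ A * (1 - y))]
  have hexpand : 2 * exp (-(A * y)) * cosh A = exp (A * (1 - y)) + exp (-(A * (1 + y))) := by
    rw [show A * (1 - y) = -(A * y) + A by ring, show -(A * (1 + y)) = -(A * y) + -A by ring,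
      exp_add, exp_add, cosh_eq]
    ring
  rw [div_le_iff₀ (cosh_pos A), hexpand]
  linarith [exp_pos (-(A * (1 + y)))]

theorem abs_cosh_div_cosh_le {β : ℝ} (hβ : 0 < β) {y : ℝ} (hy0 : 0 ≤ y) (hy1 : y ≤ 1) (n : ℕ) :
    |cosh ((n + 1) * π * (1 - y) / β) / cosh ((n + 1) * π / β)| ≤ 2 * exp (-(π / β * y)) := by
  have hA : π / β ≤ (n + 1) * π / β := by
    gcongr
    exact le_mul_of_one_le_left pi_pos.le (le_add_of_nonneg_left n.cast_nonneg)
  have hcosh := cosh_mul_one_sub_div_cosh_le (A := (n + 1) * π / β) (by positivity) hy1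
  rw [show (n + 1) * π / β * (1 - y) = (n + 1) * π * (1 - y) / β by ring] at hcosh
  rw [abs_of_nonneg (by positivity)]
  refine hcosh.trans ?_
  gcongr

theorem integral_cos_int_mul_pi_div {L : ℝ} (hL : L ≠ 0) {k : ℤ} (hk : k ≠ 0) :
    ∫ x in -L..L, cos (k * π * x / L) = 0 := by
  have hc : (k : ℝ) * π / L ≠ 0 := div_ne_zero (by simp [hk, pi_ne_zero]) hL
  simp_rw [show ∀ x, (k : ℝ) * π * x / L = k * π / L * x from fun x ↦ by ring]
  rw [integral_comp_mul_left cos hc, integral_cos, div_mul_cancel₀ _ hL, mul_neg,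
    div_mul_cancel₀ _ hL, sin_neg, sin_int_mul_pi]
  simp

theorem integral_cos_mul_cos {L : ℝ} (hL : L ≠ 0) {n : ℕ} (hn : n ≠ 0) (m : ℕ) :
    ∫ x in -L..L, cos (n * π * x / L) * cos (m * π * x / L) = if n = m then L else 0 := by
  have hprod : ∀ x, cos (n * π * x / L) * cos (m * π * x / L) =
      (cos (((n - m : ℤ) : ℝ) * π * x / L) + cos (((n + m : ℤ) : ℝ) * π * x / L)) / 2 := by
    intro x
    rw [show ((n - m : ℤ) : ℝ) * π * x / L = n * π * x / L - m * π * x / L by push_cast; ring,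
      show ((n + m : ℤ) : ℝ) * π * x / L = n * π * x / L + m * π * x / L by push_cast; ring,
      cos_sub, cos_add]
    ring
  have hcont : ∀ k : ℤ, IntervalIntegrable (fun x ↦ cos (k * π * x / L)) volume (-L) L :=
    fun k ↦ (by fun_prop : Continuous fun x ↦ cos (k * π * x / L)).intervalIntegrable _ _
  have hsum : (n + m : ℤ) ≠ 0 := by omega
  simp_rw [hprod]
  rw [intervalIntegral.integral_div, integral_add (hcont _) (hcont _),
    integral_cos_int_mul_pi_div hL hsum]
  split_ifs with h
  · simp [h, sub_neg_eq_add, ← two_mul]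
  · rw [integral_cos_int_mul_pi_div hL (by omega)]
    simp

-- Where the series diverges, `tsum` is `0`, which is trivially below the liminf.
theorem ofReal_sq_tsum_le_liminf (a : ℕ → ℝ) :
    ENNReal.ofReal ((∑' n, a n) ^ 2) ≤
      liminf (fun N ↦ ENNReal.ofReal ((∑ n ∈ range N, a n) ^ 2)) atTop := by
  by_cases ha : Summable a
  · have hlim := ENNReal.tendsto_ofReal ((ha.hasSum.tendsto_sum_nat).pow 2)
    exact hlim.liminf_eq.ge
  · simp [tsum_eq_zero_of_not_summable ha]

section L2

variable {X : Type*} [MeasurableSpace X] {μ : Measure X}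

theorem integral_sq_tsum_le_of_integral_sq_sum_le {f : ℕ → X → ℝ} (hf : ∀ n, MemLp (f n) 2 μ) {K : ℝ} (hK : 0 ≤ K)
    (h : ∀ N, ∫ x, (∑ n ∈ range N, f n x) ^ 2 ∂μ ≤ K) :
    ∫ x, (∑' n, f n x) ^ 2 ∂μ ≤ K := by
  by_cases hint : Integrable (fun x ↦ (∑' n, f n x) ^ 2) μ
  swap
  · rw [integral_undef hint]
    exact hK
  have hpartial : ∀ N, MemLp (fun x ↦ ∑ n ∈ range N, f n x) 2 μ := fun N ↦
    memLp_finsetSum _ fun n _ ↦ hf n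
  rw [integral_eq_lintegral_of_nonneg_ae (ae_of_all _ fun x ↦ sq_nonneg _)
    hint.aestronglyMeasurable]
  refine ENNReal.toReal_le_of_le_ofReal hK ?_
  calc ∫⁻ x, ENNReal.ofReal ((∑' n, f n x) ^ 2) ∂μ
      ≤ ∫⁻ x, liminf (fun N ↦ ENNReal.ofReal ((∑ n ∈ range N, f n x) ^ 2)) atTop ∂μ :=
        lintegral_mono fun x ↦ ofReal_sq_tsum_le_liminf _
    _ ≤ liminf (fun N ↦ ∫⁻ x, ENNReal.ofReal ((∑ n ∈ range N, f n x) ^ 2) ∂μ) atTop :=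
        lintegral_liminf_le' fun N ↦ ((hpartial N).aestronglyMeasurable.aemeasurable.pow_const
          2).ennreal_ofReal
    _ ≤ ENNReal.ofReal K := by
        refine liminf_le_of_frequently_le' (Frequently.of_forall fun N ↦ ?_)
        rw [← ofReal_integral_eq_lintegral_ofReal (hpartial N).integrable_sq
          (ae_of_all _ fun x ↦ sq_nonneg _)]
        exact ENNReal.ofReal_le_ofReal (h N)

theorem inner_toLp_toLp {f g : X → ℝ} (hf : MemLp f 2 μ) (hg : MemLp g 2 μ) :
    inner ℝ (hf.toLp f) (hg.toLp g) = ∫ x, f x * g x ∂μ := by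
  rw [L2.inner_def]
  refine integral_congr_ae ?_
  filter_upwards [hf.coeFn_toLp, hg.coeFn_toLp] with x hfx hgx
  simp [hfx, hgx, mul_comm]

section Orthonormal

variable {ι : Type*} {ψ : ι → X → ℝ} (hψ : ∀ i, MemLp (ψ i) 2 μ)
include hψ

theorem orthonormal_toLp [DecidableEq ι]
    (horth : ∀ i j, ∫ x, ψ i x * ψ j x ∂μ = if i = j then 1 else 0) :
    Orthonormal ℝ fun i ↦ (hψ i).toLp (ψ i) :=
  orthonormal_iff_ite.2 fun i j ↦ (inner_toLp_toLp _ _).trans (horth i j)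

theorem coeFn_sum_smul_toLp (c : ι → ℝ) (s : Finset ι) :
    ⇑(∑ i ∈ s, c i • (hψ i).toLp (ψ i)) =ᵐ[μ] fun x ↦ ∑ i ∈ s, c i * ψ i x := by
  classical
  induction s using Finset.induction_on with
  | empty => simp only [Finset.sum_empty]; exact Lp.coeFn_zero ℝ 2 μ
  | insert i s hi ih =>
    rw [Finset.sum_insert hi]
    filter_upwards [Lp.coeFn_add (c i • (hψ i).toLp (ψ i)) (∑ i ∈ s, c i • (hψ i).toLp (ψ i)),
      Lp.coeFn_smul (c i) ((hψ i).toLp (ψ i)), (hψ i).coeFn_toLp, ih] with x h1 h2 h3 h4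
    rw [h1, Pi.add_apply, h2, Pi.smul_apply, h3, h4, Finset.sum_insert hi, smul_eq_mul]

theorem integral_sq_finset_sum_of_orthonormal [DecidableEq ι]
    (horth : ∀ i j, ∫ x, ψ i x * ψ j x ∂μ = if i = j then 1 else 0) (c : ι → ℝ) (s : Finset ι) :
    ∫ x, (∑ i ∈ s, c i * ψ i x) ^ 2 ∂μ = ∑ i ∈ s, c i ^ 2 := by
  have key := (orthonormal_toLp hψ horth).inner_sum c c s
  rw [L2.inner_def] at key
  simp only [conj_trivial, ← sq] at key
  rw [← key]
  refine integral_congr_ae ?_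
  filter_upwards [coeFn_sum_smul_toLp hψ c s] with x hx
  rw [hx, real_inner_self_eq_norm_sq, Real.norm_eq_abs, sq_abs]

theorem sum_sq_integral_mul_le [DecidableEq ι]
    (horth : ∀ i j, ∫ x, ψ i x * ψ j x ∂μ = if i = j then 1 else 0)
    {u : X → ℝ} (hu : MemLp u 2 μ) (s : Finset ι) :
    ∑ i ∈ s, (∫ x, u x * ψ i x ∂μ) ^ 2 ≤ ∫ x, u x ^ 2 ∂μ := by
  have := (orthonormal_toLp hψ horth).sum_inner_products_le (hu.toLp u) (s := s)
  simp only [← real_inner_self_eq_norm_sq, inner_toLp_toLp, Real.norm_eq_abs, sq_abs] at this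
  simpa only [mul_comm (ψ _ _), sq] using this

end Orthonormal

theorem integral_sq_tsum_mul_le {ψ : ℕ → X → ℝ} (hψ : ∀ n, MemLp (ψ n) 2 μ)
    (horth : ∀ i j, ∫ x, ψ i x * ψ j x ∂μ = if i = j then 1 else 0)
    {u : X → ℝ} (hu : MemLp u 2 μ) {r : ℕ → ℝ} {R : ℝ} (hr : ∀ n, |r n| ≤ R) :
    ∫ x, (∑' n, (∫ z, u z * ψ n z ∂μ) * ψ n x * r n) ^ 2 ∂μ ≤ R ^ 2 * ∫ x, u x ^ 2 ∂μ := by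
  set a := fun n ↦ ∫ z, u z * ψ n z ∂μ
  have hR : 0 ≤ R := (abs_nonneg _).trans (hr 0)
  have hu2 : 0 ≤ ∫ x, u x ^ 2 ∂μ := integral_nonneg fun x ↦ sq_nonneg _
  refine integral_sq_tsum_le_of_integral_sq_sum_le (fun n ↦ ((hψ n).const_mul (a n)).mul_const (r n))
    (by positivity) fun N ↦ ?_
  calc ∫ x, (∑ n ∈ range N, a n * ψ n x * r n) ^ 2 ∂μ = ∑ n ∈ range N, (a n * r n) ^ 2 := by
        simp_rw [mul_right_comm _ (ψ _ _)]
        exact integral_sq_finset_sum_of_orthonormal hψ horth _ _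
    _ ≤ ∑ n ∈ range N, R ^ 2 * a n ^ 2 := sum_le_sum fun n _ ↦ by
        rw [mul_pow, mul_comm]
        exact mul_le_mul_of_nonneg_right (sq_le_sq' (abs_le.1 (hr n)).1 (abs_le.1 (hr n)).2)
          (sq_nonneg _)
    _ = R ^ 2 * ∑ n ∈ range N, a n ^ 2 := (mul_sum _ _ _).symm
    _ ≤ R ^ 2 * ∫ x, u x ^ 2 ∂μ := by
        gcongr
        exact sum_sq_integral_mul_le hψ horth hu _

end L2

theorem memLp_cosBasis {μ : Measure ℝ} [IsFiniteMeasure μ] (ε α : ℝ) (n : ℕ) (p : ENNReal) :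
    MemLp (cosBasis ε α n) p μ := by
  refine MemLp.of_bound (by unfold cosBasis; fun_prop : Continuous _).aestronglyMeasurable
    |ε ^ (-(α / 2))| (ae_of_all _ fun x ↦ ?_)
  rw [cosBasis, norm_mul, Real.norm_eq_abs, Real.norm_eq_abs]
  exact mul_le_of_le_one_right (abs_nonneg _) (abs_cos_le_one _)

theorem integral_cosBasis_mul_cosBasis {ε : ℝ} (hε : 0 < ε) (α : ℝ) {n : ℕ} (hn : n ≠ 0)
    (m : ℕ) :
    ∫ x in -(ε ^ α)..ε ^ α, cosBasis ε α n x * cosBasis ε α m x = if n = m then 1 else 0 := by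
  have hnorm : ε ^ (-(α / 2)) * ε ^ (-(α / 2)) * ε ^ α = 1 := by
    rw [← rpow_add hε, ← rpow_add hε, show -(α / 2) + -(α / 2) + α = 0 by ring, rpow_zero]
  simp_rw [cosBasis, mul_mul_mul_comm (ε ^ (-(α / 2)))]
  rw [intervalIntegral.integral_const_mul, integral_cos_mul_cos (rpow_pos_of_pos hε α).ne' hn]
  split_ifs
  · exact hnorm
  · exact mul_zero _

theorem stmt6_general (α : ℝ) :
    ∃ C : ℝ, 0 < C ∧ ∀ ε ∈ Ioo (0:ℝ) 1, ∀ u₀ : ℝ → ℝ,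
      MeasureTheory.MemLp u₀ 2
        (MeasureTheory.volume.restrict (Set.Ioo (-(ε ^ α)) (ε ^ α))) →
      ∀ y ∈ Icc (0:ℝ) 1,
        (∫ x in (-(ε ^ α))..(ε ^ α), (fourierSol ε α u₀ x y - avg ε α u₀) ^ 2)
          ≤ C * Real.exp (-(2 * y * π) / ε ^ (α - 1)) *
              ∫ x in (-(ε ^ α))..(ε ^ α), (u₀ x) ^ 2 := by
  refine ⟨4, by norm_num, ?_⟩
  rintro ε ⟨hε, -⟩ u₀ hu₀ y ⟨hy0, hy1⟩
  set μ := volume.restrict (Ioo (-(ε ^ α)) (ε ^ α))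
  have hμ (f : ℝ → ℝ) : ∫ x in -(ε ^ α)..ε ^ α, f x = ∫ x, f x ∂μ := by
    rw [integral_of_le (neg_le_self (rpow_pos_of_pos hε α).le), integral_Ioc_eq_integral_Ioo]
  have : IsFiniteMeasure μ := isFiniteMeasure_restrict.2 measure_Ioo_lt_top.ne
  set β := ε ^ (α - 1)
  have horth (i j : ℕ) : ∫ x, cosBasis ε α (i + 1) x * cosBasis ε α (j + 1) x ∂μ =
      if i = j then 1 else 0 := by
    rw [← hμ, integral_cosBasis_mul_cosBasis hε α i.succ_ne_zero]
    simp
  calc ∫ x in -(ε ^ α)..ε ^ α, (fourierSol ε α u₀ x y - avg ε α u₀) ^ 2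
      = ∫ x, (∑' n : ℕ, (∫ z, u₀ z * cosBasis ε α (n + 1) z ∂μ) * cosBasis ε α (n + 1) x *
          (cosh ((n + 1) * π * (1 - y) / β) / cosh ((n + 1) * π / β))) ^ 2 ∂μ := by
        simp only [fourierSol, add_sub_cancel_left, cosCoef, hμ]
        rfl
    _ ≤ (2 * exp (-(π / β * y))) ^ 2 * ∫ x, u₀ x ^ 2 ∂μ :=
        integral_sq_tsum_mul_le (fun n ↦ memLp_cosBasis ε α (n + 1) 2) horth hu₀
          (abs_cosh_div_cosh_le (rpow_pos_of_pos hε _) hy0 hy1)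
    _ = 4 * exp (-(2 * y * π) / β) * ∫ x in -(ε ^ α)..ε ^ α, u₀ x ^ 2 := by
        rw [hμ, mul_pow, ← exp_nat_mul]
        ring_nf

/-- there is `C > 0`, independent of `ε` and `u₀`, such that
`∫_{-ε^α}^{ε^α} |u^ε(x,y) - ū₀|² dx ≤ C exp(-2yπ/ε^{α-1}) ‖u₀‖²_{L²(-ε^α,ε^α)}`
for all `y ∈ [0,1]`. -/
theorem stmt6 (α : ℝ) (hα : 1 < α) :
    ∃ C : ℝ, 0 < C ∧ ∀ ε ∈ Ioo (0:ℝ) 1, ∀ u₀ : ℝ → ℝ,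
      MeasureTheory.MemLp u₀ 2
        (MeasureTheory.volume.restrict (Set.Ioo (-(ε ^ α)) (ε ^ α))) →
      ∀ y ∈ Icc (0:ℝ) 1,
        (∫ x in (-(ε ^ α))..(ε ^ α), (fourierSol ε α u₀ x y - avg ε α u₀) ^ 2)
          ≤ C * Real.exp (-(2 * y * π) / ε ^ (α - 1)) *
              ∫ x in (-(ε ^ α))..(ε ^ α), (u₀ x) ^ 2 :=
  stmt6_general α
end

section
/- Weak-* convergence of oscillating coefficient with variable period: Under hypothesis (H2) (G continuous in x uniformly in y, l(x)-periodic in y, l continuous with 0 < L' ≤ l ≤ L, 0 ≤ G ≤ G₁) and α > 1, the functions G_ε(x) = G(x, x/ε^α) converge weak-* in L^∞(0,1) to the local average x ↦ (1/l(x)) ∫_0^{l(x)} G(x,s) ds, i.e., for every φ ∈ L¹(0,1), ∫_0^1 G_ε(x) φ(x) dx → ∫_0^1 ( (1/l(x)) ∫_0^{l(x)} G(x,s) ds ) φ(x) dx as ε → 0. -/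
/-!
Freeze `x` at `x₀` on a short interval `[p, q]`. Substituting `y = x / c`, the integral
`∫_p^q G(x₀, x/c) dx` equals `(q - p)` times the mean of `G(x₀, ·)` up to `O(c)`: the primitive of
an `l(x₀)`-periodic function differs from its linear part by a bounded periodic function.
Since `G` is continuous in `x` uniformly in `y`, freezing `x` on the pieces of a fine partition of
`[0, 1]` costs an error that is uniform in `c`. This proves convergence against continuous test
functions `ψ`, by applying the frozen-coefficient argument to `G(x, y) ψ(x)`. The `G_ε` are
bounded by `G₁` uniformly in `ε`, so density of continuous functions in `L¹` gives all `φ`.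
-/

open Set Filter MeasureTheory intervalIntegral Topology Function

theorem tendsto_of_forall_approx {ι E : Type*} [PseudoMetricSpace E] {l : Filter ι}
    {f : ι → E} {y : E}
    (h : ∀ η > 0, ∃ g : ι → E, ∃ z, Tendsto g l (𝓝 z) ∧ (∀ᶠ c in l, dist (f c) (g c) ≤ η) ∧
      dist z y ≤ η) :
    Tendsto f l (𝓝 y) := by
  rw [Metric.tendsto_nhds]
  intro ε hε
  obtain ⟨g, z, hg, hfg, hzy⟩ := h (ε / 4) (by positivity)
  filter_upwards [hfg, Metric.tendsto_nhds.1 hg (ε / 4) (by positivity)] with c hfgc hgzc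
  calc dist (f c) y ≤ dist (f c) (g c) + dist (g c) z + dist z y := dist_triangle4 _ _ _ _
    _ < ε := by linarith

theorem tendsto_rpow_nhdsGT_zero {α : ℝ} (hα : 0 < α) :
    Tendsto (fun ε : ℝ => ε ^ α) (𝓝[>] 0) (𝓝[>] 0) := by
  refine tendsto_nhdsWithin_iff.2 ⟨?_, eventually_nhdsWithin_of_forall fun ε hε =>
    Real.rpow_pos_of_pos hε α⟩
  have := (Real.continuousAt_rpow_const 0 α (Or.inr hα.le)).tendsto.mono_left
    (nhdsWithin_le_nhds (s := Ioi 0))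
  rwa [Real.zero_rpow hα.ne'] at this

theorem exists_partition_mesh_lt {a b δ : ℝ} (hab : a ≤ b) (hδ : 0 < δ) :
    ∃ (N : ℕ) (p : ℕ → ℝ), Monotone p ∧ p 0 = a ∧ p N = b ∧
      ∀ i < N, ∀ x ∈ Icc (p i) (p (i + 1)), p i ∈ Icc a b ∧ x ∈ Icc a b ∧ |x - p i| < δ := by
  obtain ⟨N, hN⟩ := exists_nat_gt ((b - a) / δ)
  have hN0 : (0 : ℝ) < N := (div_nonneg (sub_nonneg.2 hab) hδ.le).trans_lt hN
  have hstep : 0 ≤ (b - a) / N := div_nonneg (sub_nonneg.2 hab) hN0.le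
  set p : ℕ → ℝ := fun i => a + i * ((b - a) / N)
  have hp : Monotone p := fun i j hij => by
    have : (i : ℝ) ≤ j := Nat.cast_le.2 hij
    dsimp only [p]
    nlinarith
  have hp0 : p 0 = a := by simp [p]
  have hpN : p N = b := by simp only [p]; field_simp; ring
  refine ⟨N, p, hp, hp0, hpN, fun i hi x hx => ?_⟩
  have h0 : a ≤ p i := hp0 ▸ hp (Nat.zero_le i)
  have h1 : p (i + 1) ≤ b := hpN ▸ hp hi
  have hmesh : p (i + 1) - p i < δ := by
    simp only [p]
    push_cast
    rw [add_mul, one_mul, add_sub_add_left_eq_sub, add_sub_cancel_left]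
    exact (div_lt_comm₀ hδ hN0).1 hN
  refine ⟨⟨h0, (hp i.le_succ).trans h1⟩, ⟨h0.trans hx.1, hx.2.trans h1⟩, ?_⟩
  rw [abs_of_nonneg (sub_nonneg.2 hx.1)]
  linarith [hx.2]

theorem abs_intervalIntegral_sub_sum_le {u : ℝ → ℝ} {w : ℕ → ℝ → ℝ} {p : ℕ → ℝ} {a b η : ℝ}
    {N : ℕ} (hp : Monotone p) (hp0 : p 0 = a) (hpN : p N = b) (hu : IntervalIntegrable u volume a b)
    (hw : ∀ i < N, IntervalIntegrable (w i) volume (p i) (p (i + 1)))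
    (huw : ∀ i < N, ∀ x ∈ Icc (p i) (p (i + 1)), |u x - w i x| ≤ η) :
    |(∫ x in a..b, u x) - ∑ i ∈ Finset.range N, ∫ x in p i..p (i + 1), w i x| ≤ η * (b - a) := by
  subst hp0 hpN
  have hui : ∀ i < N, IntervalIntegrable u volume (p i) (p (i + 1)) := fun i hi =>
    hu.mono_set <| by
      rw [uIcc_of_le (hp (Nat.zero_le _)), uIcc_of_le (hp i.le_succ)]
      exact Icc_subset_Icc (hp (Nat.zero_le i)) (hp hi)
  rw [← sum_integral_adjacent_intervals hui, ← Finset.sum_sub_distrib,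
    ← Finset.sum_range_sub p, Finset.mul_sum]
  refine (Finset.abs_sum_le_sum_abs _ _).trans (Finset.sum_le_sum fun i hi => ?_)
  have hi := Finset.mem_range.1 hi
  rw [← integral_sub (hui i hi) (hw i hi)]
  have := norm_integral_le_of_norm_le_const (f := fun x => u x - w i x) fun x hx =>
    (Real.norm_eq_abs _).trans_le <|
      huw i hi x (Ioc_subset_Icc_self (by rwa [uIoc_of_le (hp i.le_succ)] at hx))
  rwa [Real.norm_eq_abs, abs_of_nonneg (sub_nonneg.2 (hp i.le_succ))] at this

theorem abs_setIntegral_mul_sub_le {α : Type*} [MeasurableSpace α] {μ : Measure α} {s : Set α}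
    (hs : MeasurableSet s) {u φ ψ : α → ℝ} {K : ℝ} (hu : AEStronglyMeasurable u (μ.restrict s))
    (hub : ∀ x ∈ s, |u x| ≤ K) (hφ : IntegrableOn φ s μ) (hψ : IntegrableOn ψ s μ) :
    |(∫ x in s, u x * φ x ∂μ) - ∫ x in s, u x * ψ x ∂μ| ≤ K * ∫ x in s, |φ x - ψ x| ∂μ := by
  have hb : ∀ᵐ x ∂μ.restrict s, ‖u x‖ ≤ K := ae_restrict_of_forall_mem hs hub
  rw [← integral_sub (hφ.bdd_mul hu hb) (hψ.bdd_mul hu hb), ← MeasureTheory.integral_const_mul,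
    ← Real.norm_eq_abs]
  refine norm_integral_le_of_norm_le (g := fun x => K * |φ x - ψ x|)
    ((hφ.sub hψ).abs.const_mul K) ?_
  filter_upwards [hb] with x hx
  rw [← mul_sub, norm_mul]
  exact mul_le_mul_of_nonneg_right hx (norm_nonneg _)

theorem tendsto_intervalIntegral_mul_of_forall_continuous {ι : Type*} {l : Filter ι}
    {u : ι → ℝ → ℝ} {v : ℝ → ℝ} {a b K : ℝ} (hab : a ≤ b)
    (hu : ∀ c, AEStronglyMeasurable (u c) (volume.restrict (Ioc a b)))
    (hv : AEStronglyMeasurable v (volume.restrict (Ioc a b)))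
    (hub : ∀ c, ∀ x ∈ Ioc a b, |u c x| ≤ K) (hvb : ∀ x ∈ Ioc a b, |v x| ≤ K)
    (hlim : ∀ ψ : ℝ → ℝ, Continuous ψ →
      Tendsto (fun c => ∫ x in a..b, u c x * ψ x) l (𝓝 (∫ x in a..b, v x * ψ x)))
    {φ : ℝ → ℝ} (hφ : IntegrableOn φ (Ioc a b)) :
    Tendsto (fun c => ∫ x in a..b, u c x * φ x) l (𝓝 (∫ x in a..b, v x * φ x)) := by
  simp only [integral_of_le hab] at hlim ⊢
  refine tendsto_of_forall_approx fun η hη => ?_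
  have hφ' := (integrable_indicator_iff measurableSet_Ioc).2 hφ
  obtain ⟨ψ, -, hψφ, hψc, hψi⟩ :=
    hφ'.exists_hasCompactSupport_integral_sub_le (show 0 < η / (|K| + 1) by positivity)
  have hclose : ∫ x in Ioc a b, |φ x - ψ x| ≤ η / (|K| + 1) :=
    calc ∫ x in Ioc a b, |φ x - ψ x| = ∫ x in Ioc a b, ‖(Ioc a b).indicator φ x - ψ x‖ :=
          setIntegral_congr_fun measurableSet_Ioc fun x hx => by simp [indicator_of_mem hx]
      _ ≤ ∫ x, ‖(Ioc a b).indicator φ x - ψ x‖ :=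
          setIntegral_le_integral (hφ'.sub hψi).norm (Eventually.of_forall fun _ => norm_nonneg _)
      _ ≤ η / (|K| + 1) := hψφ
  have hbound : ∀ w : ℝ → ℝ, AEStronglyMeasurable w (volume.restrict (Ioc a b)) →
      (∀ x ∈ Ioc a b, |w x| ≤ K) →
      dist (∫ x in Ioc a b, w x * φ x) (∫ x in Ioc a b, w x * ψ x) ≤ η := fun w hw hwb => by
    rw [Real.dist_eq]
    refine (abs_setIntegral_mul_sub_le measurableSet_Ioc hw hwb hφ hψi.integrableOn).trans ?_
    calc K * ∫ x in Ioc a b, |φ x - ψ x| ≤ |K| * (η / (|K| + 1)) :=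
          mul_le_mul (le_abs_self K) hclose (integral_nonneg fun _ => abs_nonneg _) (abs_nonneg K)
      _ ≤ η := by
          rw [mul_div_assoc', div_le_iff₀ (by positivity)]
          nlinarith [abs_nonneg K]
  exact ⟨_, _, hlim ψ hψc, Eventually.of_forall fun c => hbound (u c) (hu c) (hub c),
    dist_comm (α := ℝ) _ _ ▸ hbound v hv hvb⟩

theorem Function.Periodic.tendsto_intervalIntegral_comp_div_s17 {g : ℝ → ℝ} {T : ℝ}
    (hg : Periodic g T) (hT : 0 < T) (hgc : Continuous g) (a b : ℝ) :
    Tendsto (fun c => ∫ x in a..b, g (x / c)) (𝓝[>] 0)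
      (𝓝 ((b - a) * (1 / T * ∫ s in (0:ℝ)..T, g s))) := by
  set m := 1 / T * ∫ s in (0:ℝ)..T, g s
  have hint : ∀ t₁ t₂, IntervalIntegrable g volume t₁ t₂ := hgc.intervalIntegrable
  set Q : ℝ → ℝ := fun t => (∫ s in (0:ℝ)..t, g s) - t * m
  have hQ : Periodic Q T := fun t => by
    simp only [Q, m, hg.intervalIntegral_add_eq_add 0 t hint, zero_add]
    field_simp
    ring
  obtain ⟨C, hC⟩ := (hQ.isBounded_of_continuous hT.ne'
    ((continuous_primitive hint 0).sub (continuous_id.mul continuous_const))).exists_norm_le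
  have hdecomp : ∀ c ≠ 0, ∫ x in a..b, g (x / c) = c * (Q (b / c) - Q (a / c)) + (b - a) * m := by
    intro c hc
    rw [integral_comp_div _ hc, smul_eq_mul, ← integral_interval_sub_left (hint 0 _) (hint 0 _)]
    simp only [Q]
    field_simp
    ring
  have hosc : Tendsto (fun c : ℝ => c * (Q (b / c) - Q (a / c))) (𝓝[>] 0) (𝓝 0) :=
    (tendsto_nhdsWithin_of_tendsto_nhds tendsto_id).zero_mul_isBoundedUnder_le
      (isBoundedUnder_of ⟨C + C, fun c => (norm_sub_le _ _).trans
        (add_le_add (hC _ (mem_range_self _)) (hC _ (mem_range_self _)))⟩)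
  have hlim := hosc.add_const ((b - a) * m)
  rw [zero_add] at hlim
  refine hlim.congr' ?_
  filter_upwards [self_mem_nhdsWithin] with c hc
  exact (hdecomp c (ne_of_gt hc)).symm

noncomputable def periodicMean {X : Type*} (H : X → ℝ → ℝ) (T : X → ℝ) (x : X) : ℝ :=
  1 / T x * ∫ s in (0:ℝ)..T x, H x s

/-- `H x y` is continuous in `x ∈ s` uniformly in `y`, i.e. the family `fun y x => H x y` is
`UniformEquicontinuousOn s`, in `ε`-`δ` form. -/
def UniformlyContinuousInFstOn {Y : Type*} (H : ℝ → Y → ℝ) (s : Set ℝ) : Prop :=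
  ∀ η : ℝ, 0 < η → ∃ δ : ℝ, 0 < δ ∧
    ∀ x ∈ s, ∀ x' ∈ s, |x - x'| < δ → ∀ y, |H x y - H x' y| ≤ η

theorem periodicMean_mul_right {X : Type*} (H : X → ℝ → ℝ) (T ψ : X → ℝ) (x : X) :
    periodicMean (fun x y => H x y * ψ x) T x = periodicMean H T x * ψ x := by
  simp only [periodicMean, intervalIntegral.integral_mul_const]
  ring

theorem abs_periodicMean_le {X : Type*} {H : X → ℝ → ℝ} {T : X → ℝ} {x : X} {K : ℝ}
    (hT : 0 < T x) (hH : ∀ y, |H x y| ≤ K) : |periodicMean H T x| ≤ K := by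
  have := norm_integral_le_of_norm_le_const (a := 0) (b := T x) fun y _ =>
    (Real.norm_eq_abs (H x y)).trans_le (hH y)
  rw [Real.norm_eq_abs, sub_zero, abs_of_pos hT] at this
  rw [periodicMean, abs_mul, abs_of_pos (one_div_pos.2 hT), one_div, inv_mul_le_iff₀ hT]
  linarith

theorem ContinuousOn.periodicMean {X : Type*} [TopologicalSpace X] {H : X → ℝ → ℝ}
    {T : X → ℝ} {s : Set X} (hH : ContinuousOn (uncurry H) (s ×ˢ univ)) (hT : ContinuousOn T s)
    (hT0 : ∀ x ∈ s, T x ≠ 0) : ContinuousOn (periodicMean H T) s := by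
  have hint : ContinuousOn (fun x => ∫ t in (0:ℝ)..T x, H x t) s := by
    rw [continuousOn_iff_continuous_domRestrict] at hT ⊢
    exact continuous_parametric_intervalIntegral_of_continuous (f := fun (x : s) t => H x t)
      (hH.comp_continuous (f := fun p : s × ℝ => ((p.1 : X), p.2)) (by fun_prop)
        fun p => ⟨p.1.2, mem_univ _⟩) hT
  exact (continuousOn_const.div hT hT0).mul hint

namespace UniformlyContinuousInFstOn

variable {Y : Type*} {H : ℝ → Y → ℝ} {s : Set ℝ}

theorem continuousOn_uncurry [TopologicalSpace Y] (hH : UniformlyContinuousInFstOn H s)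
    (hHy : ∀ x ∈ s, Continuous (H x)) : ContinuousOn (uncurry H) (s ×ˢ univ) := by
  rintro ⟨x, y⟩ ⟨hx, -⟩
  have hfst : Tendsto (fun p : ℝ × Y => H p.1 p.2 - H x p.2) (𝓝[s ×ˢ univ] (x, y)) (𝓝 0) := by
    rw [Metric.tendsto_nhds]
    intro ε hε
    obtain ⟨δ, hδ, hHδ⟩ := hH (ε / 2) (by positivity)
    have hnear : ∀ᶠ p : ℝ × Y in 𝓝[s ×ˢ univ] (x, y), |p.1 - x| < δ :=
      ((continuous_fst.tendsto (x, y)).mono_left nhdsWithin_le_nhds).eventually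
        (eventually_abs_sub_lt x hδ)
    filter_upwards [self_mem_nhdsWithin, hnear] with p hp hpx
    rw [Real.dist_eq, sub_zero]
    exact (hHδ _ hp.1 x hx hpx _).trans_lt (half_lt_self hε)
  have hsnd : Tendsto (fun p : ℝ × Y => H x p.2) (𝓝[s ×ˢ univ] (x, y)) (𝓝 (H x y)) :=
    ((hHy x hx).tendsto y).comp ((continuous_snd.tendsto (x, y)).mono_left nhdsWithin_le_nhds)
  have := hfst.add hsnd
  simp only [sub_add_cancel, zero_add] at this
  exact this

theorem continuousOn_comp [TopologicalSpace Y] (hH : UniformlyContinuousInFstOn H s)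
    (hHy : ∀ x ∈ s, Continuous (H x)) {f : ℝ → Y} (hf : Continuous f) :
    ContinuousOn (fun x => H x (f x)) s :=
  (hH.continuousOn_uncurry hHy).comp (continuousOn_id.prodMk hf.continuousOn)
    fun _ hx => ⟨hx, mem_univ _⟩

theorem mul {ψ : ℝ → ℝ} {K M : ℝ} (hH : UniformlyContinuousInFstOn H s)
    (hHb : ∀ x ∈ s, ∀ y, |H x y| ≤ K) (hψ : UniformContinuousOn ψ s) (hψb : ∀ x ∈ s, |ψ x| ≤ M) :
    UniformlyContinuousInFstOn (fun x y => H x y * ψ x) s := by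
  intro η hη
  obtain ⟨δ₁, hδ₁, hH₁⟩ := hH (η / (2 * (|M| + 1))) (by positivity)
  obtain ⟨δ₂, hδ₂, hψ₂⟩ := Metric.uniformContinuousOn_iff.1 hψ (η / (2 * (|K| + 1)))
    (by positivity)
  refine ⟨min δ₁ δ₂, lt_min hδ₁ hδ₂, fun x hx x' hx' hxx' y => ?_⟩
  have hH' := hH₁ x hx x' hx' (hxx'.trans_le (min_le_left _ _)) y
  have hψ' : |ψ x - ψ x'| ≤ η / (2 * (|K| + 1)) := by
    rw [← Real.dist_eq]
    exact (hψ₂ x hx x' hx' (by rw [Real.dist_eq]; exact hxx'.trans_le (min_le_right _ _))).le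
  have hψx : |ψ x| ≤ |M| + 1 := by linarith [hψb x hx, le_abs_self M]
  have hHx' : |H x' y| ≤ |K| + 1 := by linarith [hHb x' hx' y, le_abs_self K]
  calc |H x y * ψ x - H x' y * ψ x'|
      = |(H x y - H x' y) * ψ x + H x' y * (ψ x - ψ x')| := by ring_nf
    _ ≤ |H x y - H x' y| * |ψ x| + |H x' y| * |ψ x - ψ x'| := by
        rw [← abs_mul, ← abs_mul]; exact abs_add_le _ _
    _ ≤ η / (2 * (|M| + 1)) * (|M| + 1) + (|K| + 1) * (η / (2 * (|K| + 1))) := by gcongr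
    _ = η := by field_simp; ring

end UniformlyContinuousInFstOn

theorem tendsto_intervalIntegral_comp_div_periodicMean {H : ℝ → ℝ → ℝ} {T : ℝ → ℝ} {a b : ℝ}
    (hab : a ≤ b) (hT : ∀ x ∈ Icc a b, 0 < T x) (hTc : ContinuousOn T (Icc a b))
    (hHy : ∀ x ∈ Icc a b, Continuous (H x)) (hper : ∀ x ∈ Icc a b, Periodic (H x) (T x))
    (hHx : UniformlyContinuousInFstOn H (Icc a b)) :
    Tendsto (fun c => ∫ x in a..b, H x (x / c)) (𝓝[>] 0)
      (𝓝 (∫ x in a..b, periodicMean H T x)) := by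
  have hm : ContinuousOn (periodicMean H T) (Icc a b) :=
    (hHx.continuousOn_uncurry hHy).periodicMean hTc fun x hx => (hT x hx).ne'
  refine tendsto_of_forall_approx fun η hη => ?_
  obtain ⟨δ₁, hδ₁, hHδ⟩ := hHx (η / (b - a + 1)) (by positivity)
  obtain ⟨δ₂, hδ₂, hmδ⟩ := Metric.uniformContinuousOn_iff.1
    (isCompact_Icc.uniformContinuousOn_of_continuous hm) (η / (b - a + 1)) (by positivity)
  obtain ⟨N, p, hp, hp0, hpN, hpiece⟩ := exists_partition_mesh_lt hab (lt_min hδ₁ hδ₂)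
  have hη : η / (b - a + 1) * (b - a) ≤ η := by
    rw [div_mul_eq_mul_div, div_le_iff₀ (by linarith)]
    nlinarith
  refine ⟨fun c => ∑ i ∈ Finset.range N, ∫ x in p i..p (i + 1), H (p i) (x / c),
    ∑ i ∈ Finset.range N, ∫ x in p i..p (i + 1), periodicMean H T (p i), ?_, ?_, ?_⟩
  · refine tendsto_finsetSum _ fun i hi => ?_
    obtain ⟨hpi, -⟩ := hpiece i (Finset.mem_range.1 hi) (p i) ⟨le_rfl, hp i.le_succ⟩
    simpa only [intervalIntegral.integral_const, smul_eq_mul, periodicMean] using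
      (hper _ hpi).tendsto_intervalIntegral_comp_div_s17 (hT _ hpi) (hHy _ hpi) (p i) (p (i + 1))
  · refine Eventually.of_forall fun c => (Real.dist_eq _ _).trans_le <|
      (abs_intervalIntegral_sub_sum_le hp hp0 hpN
        ((hHx.continuousOn_comp hHy (continuous_id.div_const c)).intervalIntegrable_of_Icc hab)
        (fun i hi => ?_) fun i hi x hx => ?_).trans hη
    · obtain ⟨hpi, -⟩ := hpiece i hi (p i) ⟨le_rfl, hp i.le_succ⟩
      exact ((hHy _ hpi).comp (continuous_id.div_const c)).intervalIntegrable _ _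
    · obtain ⟨hpi, hx', hclose⟩ := hpiece i hi x hx
      exact hHδ x hx' (p i) hpi (hclose.trans_le (min_le_left _ _)) _
  · rw [dist_comm, Real.dist_eq]
    refine (abs_intervalIntegral_sub_sum_le hp hp0 hpN (hm.intervalIntegrable_of_Icc hab)
      (fun i _ => intervalIntegrable_const) fun i hi x hx => ?_).trans hη
    obtain ⟨hpi, hx', hclose⟩ := hpiece i hi x hx
    rw [← Real.dist_eq]
    exact (hmδ x hx' (p i) hpi (by rw [Real.dist_eq]; exact hclose.trans_le (min_le_right _ _))).le

/-- weak-* convergence in `L^∞(0,1)` of the oscillating coefficient with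
variable period: under (H2), `G_ε(x) = G(x,x/ε^α)` converges weak-* to
`x ↦ (1/l(x)) ∫_0^{l(x)} G(x,s) ds`, i.e. testing against any `φ ∈ L¹(0,1)`. -/
theorem stmt17 (G : ℝ → ℝ → ℝ) (l : ℝ → ℝ) (L L' G₁ α : ℝ)
    (hL' : 0 < L') (hlL : ∀ x ∈ Icc (0:ℝ) 1, L' ≤ l x ∧ l x ≤ L)
    (hlcont : ContinuousOn l (Icc (0:ℝ) 1))
    (hGbd : ∀ x ∈ Icc (0:ℝ) 1, ∀ y : ℝ, 0 ≤ G x y ∧ G x y ≤ G₁)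
    (hGy : ∀ x ∈ Icc (0:ℝ) 1, Continuous (fun y => G x y))
    (hper : ∀ x ∈ Icc (0:ℝ) 1, ∀ y : ℝ, G x (y + l x) = G x y)
    (hunif : ∀ η : ℝ, 0 < η → ∃ δ : ℝ, 0 < δ ∧ ∀ x ∈ Icc (0:ℝ) 1, ∀ x' ∈ Icc (0:ℝ) 1,
      |x - x'| < δ → ∀ y : ℝ, |G x y - G x' y| ≤ η)
    (hα : 1 < α) :
    ∀ φ : ℝ → ℝ,
      MeasureTheory.IntegrableOn φ (Ioo (0:ℝ) 1) MeasureTheory.volume →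
      Tendsto (fun ε : ℝ => ∫ x in (0:ℝ)..1, G x (x / ε ^ α) * φ x)
        (nhdsWithin 0 (Ioi 0))
        (nhds (∫ x in (0:ℝ)..1, ((1 / l x) * ∫ s in (0:ℝ)..(l x), G x s) * φ x)) := by
  intro φ hφ
  have hl : ∀ x ∈ Icc (0:ℝ) 1, 0 < l x := fun x hx => hL'.trans_le (hlL x hx).1
  have hGabs : ∀ x ∈ Icc (0:ℝ) 1, ∀ y, |G x y| ≤ G₁ := fun x hx y =>
    (abs_of_nonneg (hGbd x hx y).1).trans_le (hGbd x hx y).2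
  have hunif' : UniformlyContinuousInFstOn G (Icc 0 1) := hunif
  have hGε : ∀ c, ContinuousOn (fun x => G x (x / c)) (Icc 0 1) := fun c =>
    hunif'.continuousOn_comp hGy (continuous_id.div_const c)
  have hF := (hunif'.continuousOn_uncurry hGy).periodicMean hlcont fun x hx => (hl x hx).ne'
  refine tendsto_intervalIntegral_mul_of_forall_continuous (u := fun ε x => G x (x / ε ^ α))
    (v := periodicMean G l) zero_le_one
    (fun ε => ((hGε _).mono Ioc_subset_Icc_self).aestronglyMeasurable measurableSet_Ioc)
    ((hF.mono Ioc_subset_Icc_self).aestronglyMeasurable measurableSet_Ioc)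
    (fun ε x hx => hGabs x (Ioc_subset_Icc_self hx) _)
    (fun x hx => abs_periodicMean_le (hl x (Ioc_subset_Icc_self hx))
      (hGabs x (Ioc_subset_Icc_self hx))) (fun ψ hψ => ?_)
    (hφ.congr_set_ae Ioo_ae_eq_Ioc.symm)
  obtain ⟨M, hM⟩ := isCompact_Icc.exists_bound_of_continuousOn hψ.continuousOn
  have := (tendsto_intervalIntegral_comp_div_periodicMean (H := fun x y => G x y * ψ x)
    zero_le_one hl hlcont (fun x hx => (hGy x hx).mul continuous_const)
    (fun x hx y => congrArg (· * ψ x) (hper x hx y))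
    (hunif'.mul hGabs (isCompact_Icc.uniformContinuousOn_of_continuous hψ.continuousOn)
      hM)).comp (tendsto_rpow_nhdsGT_zero (zero_lt_one.trans hα))
  simpa only [periodicMean_mul_right, comp_def] using this
end
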